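/- arXiv:1308.3267 — 3 statements merged into one kernel-verified Lean document; each statement's English description precedes it below -/
import Mathlib

section
/- Let N be a positive integer; write N = σ²q with σ, q positive integers and q squarefree. Let ε be the greatest common divisor of all integers a − d where a, d are the diagonal entries of some matrix in Γ₀(N), and set v(N) = gcd(σ, ε). Then v(N) = 2^μ · 3^w, where μ = min(3, ⌊v₂(N)/2⌋) and w = min(1, ⌊v₃(N)/2⌋), and v_p(N) denotes the p-adic valuation of N. -/
open Matrix CongruenceSubgroup

/-- **The 'moreover' part of Newman's theorem.** Write `N = σ² q` with `q` squarefree, let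
`ε` be the gcd of all `a - d` over matrices in `Γ₀(N)` with diagonal entries `a, d`, and set
`v(N) = gcd(σ, ε)`. Then `v(N) = 2^μ · 3^w` where `μ = min(3, ⌊v₂(N)/2⌋)` and
`w = min(1, ⌊v₃(N)/2⌋)`. -/
theorem newman_vN_eq
    (N : ℕ) (hN : 0 < N) (σ q : ℕ) (hσ : 0 < σ) (hq : 0 < q) (hqsf : Squarefree q)
    (hNσq : N = σ ^ 2 * q)
    (ε : ℕ)
    (hε : ∀ γ : Matrix.SpecialLinearGroup (Fin 2) ℤ, γ ∈ Gamma0 N →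
      (ε : ℤ) ∣ ((γ : Matrix (Fin 2) (Fin 2) ℤ) 0 0 - (γ : Matrix (Fin 2) (Fin 2) ℤ) 1 1))
    (hεgcd : ∀ e : ℕ, (∀ γ : Matrix.SpecialLinearGroup (Fin 2) ℤ, γ ∈ Gamma0 N →
      (e : ℤ) ∣ ((γ : Matrix (Fin 2) (Fin 2) ℤ) 0 0 - (γ : Matrix (Fin 2) (Fin 2) ℤ) 1 1)) →
      e ∣ ε) :
    Nat.gcd σ ε = 2 ^ min 3 (N.factorization 2 / 2) * 3 ^ min 1 (N.factorization 3 / 2) := by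
  -- finite check: in ZMod m with m ∣ 24, every unit is its own inverse
  have key24 : ∀ m : ℕ, m ∣ 24 → ∀ x y : ZMod m, x * y = 1 → x = y := by
    intro m hm
    have h1 : m ≤ 24 := Nat.le_of_dvd (by norm_num) hm
    have h0 : m ≠ 0 := by rintro rfl; norm_num at hm
    have h2 : 1 ≤ m := Nat.pos_of_ne_zero h0
    revert hm
    interval_cases m <;> decide
  -- ε ∣ N
  have hεN : (ε : ℤ) ∣ (N : ℤ) := by
    have hdet : (!![(1:ℤ), -1; (N:ℤ), 1 - N]).det = 1 := by
      rw [Matrix.det_fin_two_of]; ring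
    have hmem : (⟨_, hdet⟩ : Matrix.SpecialLinearGroup (Fin 2) ℤ) ∈ Gamma0 N := by
      exact Gamma0_mem.mpr (by simp)
    have := hε _ hmem
    simpa using this
  -- ε divides a² - 1 for every a coprime to N
  have hA : ∀ a : ℤ, IsCoprime a (N : ℤ) → (ε : ℤ) ∣ a ^ 2 - 1 := by
    intro a hcop
    obtain ⟨u, v, huv⟩ := hcop
    have hdet : (!![a, -v; (N:ℤ), u]).det = 1 := by
      rw [Matrix.det_fin_two_of]; linarith
    have hmem : (⟨_, hdet⟩ : Matrix.SpecialLinearGroup (Fin 2) ℤ) ∈ Gamma0 N := by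
      exact Gamma0_mem.mpr (by simp)
    have hd : (ε : ℤ) ∣ a - u := by simpa using hε _ hmem
    have h1 : (ε : ℤ) ∣ a * u - 1 := by
      have : a * u - 1 = -(v * N) := by linarith
      rw [this]
      exact ((hεN.mul_left v).neg_right)
    have h2 : a ^ 2 - 1 = a * (a - u) + (a * u - 1) := by ring
    rw [h2]
    exact dvd_add (hd.mul_left a) h1
  -- any divisor of N and of 24 divides all diagonal differences
  have hdiag : ∀ e : ℕ, e ∣ N → e ∣ 24 →
      ∀ γ : Matrix.SpecialLinearGroup (Fin 2) ℤ, γ ∈ Gamma0 N →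
      (e : ℤ) ∣ ((γ : Matrix (Fin 2) (Fin 2) ℤ) 0 0 - (γ : Matrix (Fin 2) (Fin 2) ℤ) 1 1) := by
    intro e heN he24 γ hγ
    set A : Matrix (Fin 2) (Fin 2) ℤ := (γ : Matrix (Fin 2) (Fin 2) ℤ) with hA'
    have hc : (N : ℤ) ∣ A 1 0 := by
      have := Gamma0_mem.mp hγ
      rwa [← ZMod.intCast_zmod_eq_zero_iff_dvd]
    have hdet : A 0 0 * A 1 1 - A 0 1 * A 1 0 = 1 := by
      rw [← Matrix.det_fin_two]; exact γ.2
    have h1 : (e : ℤ) ∣ A 0 0 * A 1 1 - 1 := by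
      have heq : A 0 0 * A 1 1 - 1 = A 0 1 * A 1 0 := by linarith
      rw [heq]
      exact (((Int.natCast_dvd_natCast.mpr heN).trans hc).mul_left _)
    have hx : ((A 0 0 : ℤ) : ZMod e) * ((A 1 1 : ℤ) : ZMod e) = 1 := by
      have := (ZMod.intCast_zmod_eq_zero_iff_dvd _ e).mpr h1
      push_cast at this
      linear_combination this
    have := key24 e he24 _ _ hx
    rw [← ZMod.intCast_zmod_eq_zero_iff_dvd]
    push_cast
    rw [sub_eq_zero]
    exact this
  -- killing lemma: no p^j with bad r can divide gcd σ ε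
  have hB : ∀ p j r : ℕ, p.Prime → 1 ≤ j → p ^ j ∣ Nat.gcd σ ε → Nat.Coprime r p →
      ¬ ((p : ℤ) ^ j ∣ (r : ℤ) ^ 2 - 1) → False := by
    intro p j r hp hj hdvd hrp hnd
    have hpσ : p ^ j ∣ σ := hdvd.trans (Nat.gcd_dvd_left _ _)
    have hpε : p ^ j ∣ ε := hdvd.trans (Nat.gcd_dvd_right _ _)
    set e := N.factorization p with he
    have hje : j ≤ e := by
      have h2j : p ^ (2 * j) ∣ N := by
        have hpm : p ^ (2 * j) = (p ^ j) ^ 2 := by ring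
        rw [hNσq, hpm]
        exact Dvd.dvd.mul_right (pow_dvd_pow_of_dvd hpσ 2) q
      have := (Nat.Prime.pow_dvd_iff_le_factorization hp hN.ne').mp h2j
      omega
    set M := N / p ^ e with hM
    have hcop : Nat.Coprime (p ^ e) M := (Nat.coprime_ordCompl hp hN.ne').pow_left e
    obtain ⟨a, ha1, ha2⟩ := Nat.chineseRemainder hcop r 1
    have hpe1 : (p : ℤ) ^ e ∣ (r : ℤ) - (a : ℤ) := by
      have := ha1.dvd
      push_cast at this ⊢
      exact this
    have haN : Nat.Coprime a N := by
      have hNe : N = p ^ e * M := (Nat.ordProj_mul_ordCompl_eq_self N p).symm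
      rw [hNe]
      refine Nat.Coprime.mul_right ?_ ?_
      · refine Nat.Coprime.pow_right e ?_
        rw [Nat.coprime_comm, hp.coprime_iff_not_dvd]
        intro hpa
        have hpj1 : (p : ℤ) ∣ (r : ℤ) - (a : ℤ) := by
          refine dvd_trans ?_ hpe1
          exact dvd_pow_self _ (by omega : e ≠ 0)
        have : (p : ℤ) ∣ (r : ℤ) := by
          have : (r : ℤ) = ((r : ℤ) - a) + a := by ring
          rw [this]
          exact dvd_add hpj1 (Int.natCast_dvd_natCast.mpr hpa)
        have : p ∣ r := Int.natCast_dvd_natCast.mp this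
        exact (Nat.Prime.coprime_iff_not_dvd hp).mp hrp.symm this
      · have h := Nat.ModEq.gcd_eq (ha2.symm)
        simpa [Nat.Coprime, Nat.gcd_one_left] using h.symm
    have hcopZ : IsCoprime (a : ℤ) (N : ℤ) := Nat.isCoprime_iff_coprime.mpr haN
    have hεa : (ε : ℤ) ∣ (a : ℤ) ^ 2 - 1 := hA _ hcopZ
    have hpja : (p : ℤ) ^ j ∣ (a : ℤ) ^ 2 - 1 := by
      refine dvd_trans ?_ hεa
      exact_mod_cast Int.natCast_dvd_natCast.mpr hpε
    have hpjra : (p : ℤ) ^ j ∣ (r : ℤ) - a :=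
      dvd_trans (pow_dvd_pow _ hje) hpe1
    apply hnd
    have : (r : ℤ) ^ 2 - 1 = ((r : ℤ) - a) * ((r : ℤ) + a) + ((a : ℤ) ^ 2 - 1) := by ring
    rw [this]
    exact dvd_add (hpjra.mul_right _) hpja
  -- factorization of σ
  have hσ2 : σ ^ 2 ≠ 0 := by positivity
  have hfσ : ∀ p : ℕ, σ.factorization p = N.factorization p / 2 := by
    intro p
    have hfq : q.factorization p ≤ 1 := hqsf.natFactorization_le_one p
    have : N.factorization p = 2 * σ.factorization p + q.factorization p := by
      rw [hNσq, Nat.factorization_mul hσ2 hq.ne', Nat.factorization_pow]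
      simp
    omega
  set μ := min 3 (N.factorization 2 / 2) with hμ
  set w := min 1 (N.factorization 3 / 2) with hw
  have hμσ : μ ≤ σ.factorization 2 := by rw [hfσ]; exact min_le_right _ _
  have hwσ : w ≤ σ.factorization 3 := by rw [hfσ]; exact min_le_right _ _
  have h2σ : 2 ^ μ ∣ σ :=
    (Nat.Prime.pow_dvd_iff_le_factorization Nat.prime_two hσ.ne').mpr hμσ
  have h3σ : 3 ^ w ∣ σ :=
    (Nat.Prime.pow_dvd_iff_le_factorization Nat.prime_three hσ.ne').mpr hwσ
  have hcop23 : Nat.Coprime (2 ^ μ) (3 ^ w) := Nat.Coprime.pow _ _ (by norm_num)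
  have he0σ : 2 ^ μ * 3 ^ w ∣ σ := hcop23.mul_dvd_of_dvd_of_dvd h2σ h3σ
  have hσN : σ ∣ N := ⟨σ * q, by rw [hNσq]; ring⟩
  have he0N : 2 ^ μ * 3 ^ w ∣ N := he0σ.trans hσN
  have he024 : 2 ^ μ * 3 ^ w ∣ 24 := by
    have h1 : 2 ^ μ ∣ 2 ^ 3 := pow_dvd_pow 2 (min_le_left _ _)
    have h2 : 3 ^ w ∣ 3 ^ 1 := pow_dvd_pow 3 (min_le_left _ _)
    calc 2 ^ μ * 3 ^ w ∣ 2 ^ 3 * 3 ^ 1 := mul_dvd_mul h1 h2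
      _ = 24 := by norm_num
  have he0ε : 2 ^ μ * 3 ^ w ∣ ε := hεgcd _ (hdiag _ he0N he024)
  have hlow : 2 ^ μ * 3 ^ w ∣ Nat.gcd σ ε := Nat.dvd_gcd he0σ he0ε
  -- upper bound
  set g := Nat.gcd σ ε with hg
  have hg0 : g ≠ 0 := by
    have : 0 < Nat.gcd σ ε := Nat.gcd_pos_of_pos_left _ hσ
    omega
  have he00 : 2 ^ μ * 3 ^ w ≠ 0 := by positivity
  have hgσ : g ∣ σ := Nat.gcd_dvd_left _ _
  have hgfact : ∀ p : ℕ, g.factorization p ≤ σ.factorization p :=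
    fun p => (Nat.factorization_le_iff_dvd hg0 hσ.ne').mpr hgσ p
  have hhigh : g ∣ 2 ^ μ * 3 ^ w := by
    rw [← Nat.factorization_le_iff_dvd hg0 he00]
    intro p
    show g.factorization p ≤ (2 ^ μ * 3 ^ w).factorization p
    have hrhs : (2 ^ μ * 3 ^ w).factorization p
        = (if 2 = p then μ else 0) + (if 3 = p then w else 0) := by
      rw [Nat.factorization_mul (by positivity) (by positivity),
        Nat.factorization_pow, Nat.factorization_pow,
        Nat.Prime.factorization Nat.prime_two, Nat.Prime.factorization Nat.prime_three]
      simp [Finsupp.single_apply]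
    rw [hrhs]
    by_cases hgp : g.factorization p = 0
    · omega
    have hp : p.Prime := Nat.prime_of_mem_primeFactors (by
      rw [← Nat.support_factorization]; exact Finsupp.mem_support_iff.mpr hgp)
    rcases eq_or_ne p 2 with rfl | hp2
    · -- p = 2 : factorization ≤ min 3 (v₂N/2)
      have h3' : g.factorization 2 ≤ 3 := by
        by_contra hcon
        have : 2 ^ 4 ∣ g :=
          (Nat.Prime.pow_dvd_iff_le_factorization Nat.prime_two hg0).mpr (by omega)
        exact hB 2 4 3 Nat.prime_two (by norm_num) this (by norm_num) (by norm_num)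
      have h4 := hgfact 2
      rw [hfσ] at h4
      have hif : (if (2:ℕ) = 2 then μ else 0) + (if (3:ℕ) = 2 then w else 0) = μ := by
        norm_num
      rw [hif, hμ]
      exact le_min h3' h4
    rcases eq_or_ne p 3 with rfl | hp3
    · have h1' : g.factorization 3 ≤ 1 := by
        by_contra hcon
        have : 3 ^ 2 ∣ g :=
          (Nat.Prime.pow_dvd_iff_le_factorization Nat.prime_three hg0).mpr (by omega)
        exact hB 3 2 2 Nat.prime_three (by norm_num) this (by norm_num) (by norm_num)
      have h4 := hgfact 3
      rw [hfσ] at h4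
      have hif : (if (2:ℕ) = 3 then μ else 0) + (if (3:ℕ) = 3 then w else 0) = w := by
        norm_num
      rw [hif, hw]
      exact le_min h1' h4
    · -- p ≥ 5
      exfalso
      have hpg : p ∣ g := Nat.dvd_of_factorization_pos hgp
      refine hB p 1 2 hp le_rfl (by simpa using hpg) ?_ ?_
      · rw [Nat.coprime_comm, hp.coprime_iff_not_dvd]
        intro h
        exact hp2 ((Nat.prime_dvd_prime_iff_eq hp Nat.prime_two).mp h)
      · simp only [pow_one]
        norm_num
        intro hdvd
        have : p ∣ 3 := by exact_mod_cast hdvd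
        have := (Nat.prime_dvd_prime_iff_eq hp Nat.prime_three).mp this
        exact hp3 this
  exact Nat.dvd_antisymm hhigh hlow
end

section
/- Let N be a positive integer and let d, d' be Hall divisors of N with gcd(d, d') = 1. Then dd' is a Hall divisor of N, and for any Atkin–Lehner matrices w_d and w_{d'} (for the Hall divisors d and d' of N) there exists an Atkin–Lehner matrix w_{dd'} for the Hall divisor dd' such that w_d · w_{d'} ∈ ±Γ₀(N) · w_{dd'}; that is, w_d · w_{d'} = w_{dd'} in Norm(Γ₀(N))/±Γ₀(N). -/
open Matrix CongruenceSubgroup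

/-- The reduction-of-scalars map `SL(2, ℤ) →* SL(2, ℝ)`. -/
def SL2ZtoSL2R : Matrix.SpecialLinearGroup (Fin 2) ℤ →* Matrix.SpecialLinearGroup (Fin 2) ℝ :=
  Matrix.SpecialLinearGroup.map (Int.castRingHom ℝ)

/-- The subgroup `±Γ₀(N)` of `SL(2, ℝ)`, generated by the image of `Γ₀(N)` and `-1`. -/
def PMGamma0 (N : ℕ) : Subgroup (Matrix.SpecialLinearGroup (Fin 2) ℝ) :=
  (Gamma0 N).map SL2ZtoSL2R ⊔ Subgroup.zpowers (-1)

/-- `w` is an Atkin–Lehner matrix of level `N` for the Hall divisor `m` of `N`: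
a matrix of the form `(1/√m)·!![ma, b; Nc, md]` with integer entries (and determinant 1,
which holds automatically as `w ∈ SL(2, ℝ)`). -/
def IsAtkinLehner (N m : ℕ) (w : Matrix.SpecialLinearGroup (Fin 2) ℝ) : Prop :=
  ∃ a b c d : ℤ, (w : Matrix (Fin 2) (Fin 2) ℝ) =
    (Real.sqrt m)⁻¹ • !![(m : ℝ) * (a : ℝ), (b : ℝ); (N : ℝ) * (c : ℝ), (m : ℝ) * (d : ℝ)]

/-- If `d, d'` are coprime Hall divisors of `N`, then `dd'` is a Hall divisor of `N` and
for any Atkin–Lehner matrices `w_d`, `w_{d'}` there is an Atkin–Lehner matrix `w_{dd'}`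
with `w_d · w_{d'} ∈ ±Γ₀(N) · w_{dd'}`, i.e. `w_d w_{d'} = w_{dd'}` in
`Norm(Γ₀(N))/±Γ₀(N)`. -/
theorem atkinLehner_mul
    (N : ℕ) (hN : 0 < N) (d d' : ℕ)
    (hd : d ∣ N) (hdHall : Nat.gcd d (N / d) = 1)
    (hd' : d' ∣ N) (hd'Hall : Nat.gcd d' (N / d') = 1)
    (hdd' : Nat.gcd d d' = 1)
    (wd wd' : Matrix.SpecialLinearGroup (Fin 2) ℝ)
    (hwd : IsAtkinLehner N d wd) (hwd' : IsAtkinLehner N d' wd') :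
    (d * d' ∣ N ∧ Nat.gcd (d * d') (N / (d * d')) = 1) ∧
      ∃ w : Matrix.SpecialLinearGroup (Fin 2) ℝ, IsAtkinLehner N (d * d') w ∧
        ∃ γ ∈ PMGamma0 N, wd * wd' = γ * w := by
  have hdvd : d * d' ∣ N := Nat.Coprime.mul_dvd_of_dvd_of_dvd hdd' hd hd'
  set m : ℕ := N / (d * d') with hm
  have hNm : N = d * d' * m := (Nat.mul_div_cancel' hdvd).symm
  -- Hall divisor property for d*d'
  have hNd : N / d = d' * m := by
    have : d * (N / d) = d * (d' * m) := by rw [Nat.mul_div_cancel' hd, hNm]; ring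
    exact Nat.eq_of_mul_eq_mul_left (Nat.pos_of_dvd_of_pos hd hN) this
  have hNd' : N / d' = d * m := by
    have : d' * (N / d') = d' * (d * m) := by rw [Nat.mul_div_cancel' hd', hNm]; ring
    exact Nat.eq_of_mul_eq_mul_left (Nat.pos_of_dvd_of_pos hd' hN) this
  have h1 : Nat.Coprime d m := Nat.Coprime.coprime_dvd_right ⟨d', by rw [hNd]; ring⟩ hdHall
  have h2 : Nat.Coprime d' m := Nat.Coprime.coprime_dvd_right ⟨d, by rw [hNd']; ring⟩ hd'Hall
  have hcop : Nat.gcd (d * d') m = 1 := Nat.Coprime.mul h1 h2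
  refine ⟨⟨hdvd, hcop⟩, wd * wd', ?_, 1, one_mem _, (one_mul _).symm⟩
  obtain ⟨a, b, c, e, hw1⟩ := hwd
  obtain ⟨a', b', c', e', hw2⟩ := hwd'
  have hdpos : 0 < d := Nat.pos_of_dvd_of_pos hd hN
  have hd'pos : 0 < d' := Nat.pos_of_dvd_of_pos hd' hN
  refine ⟨a * a' + (m : ℤ) * (b * c'), d * a * b' + d' * b * e',
    d' * c * a' + d * e * c', (m : ℤ) * (c * b') + e * e', ?_⟩
  have hNR : (N : ℝ) = (d : ℝ) * (d' : ℝ) * (m : ℝ) := by exact_mod_cast congrArg (Nat.cast : ℕ → ℝ) hNm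
  have hsqrt : (Real.sqrt d)⁻¹ * (Real.sqrt d')⁻¹ = (Real.sqrt (d * d' : ℕ))⁻¹ := by
    rw [← mul_inv, ← Real.sqrt_mul (by positivity : (0:ℝ) ≤ (d:ℝ))]
    push_cast
    ring_nf
  rw [Matrix.SpecialLinearGroup.coe_mul, hw1, hw2, Matrix.smul_mul, Matrix.mul_smul, smul_smul,
    hsqrt]
  congr 1
  ext i j
  fin_cases i <;> fin_cases j <;>
    · simp [Matrix.mul_apply, Fin.sum_univ_two]
      push_cast [hNR]
      ring
end

section
/- Let N ≥ 5 be an integer. A matrix g ∈ SL(2,ℝ) normalizes the subgroup ±Γ(N) of SL(2,ℝ) if and only if g or −g lies in the image of SL(2,ℤ) in SL(2,ℝ); equivalently, the normalizer of the image of Γ(N) in PSL(2,ℝ) is PSL(2,ℤ). -/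
open Matrix CongruenceSubgroup
open scoped MatrixGroups Pointwise

/-- The subgroup `±Γ(N)` of `SL(2, ℝ)`, generated by the image of `Γ(N)` and `-1`. -/
def PMGamma (N : ℕ) : Subgroup (Matrix.SpecialLinearGroup (Fin 2) ℝ) :=
  (Gamma N).map SL2ZtoSL2R ⊔ Subgroup.zpowers (-1)

lemma zpowers_neg_one_normal : (Subgroup.zpowers (-1 : SL(2, ℝ))).Normal := by
  constructor
  rintro - ⟨k, rfl⟩ g
  have hc : Commute g ((-1 : SL(2, ℝ)) ^ k) := (Commute.neg_one_right g).zpow_right k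
  refine ⟨k, ?_⟩
  show (-1 : SL(2, ℝ)) ^ k = g * (-1 : SL(2, ℝ)) ^ k * g⁻¹
  rw [hc.eq, mul_inv_cancel_right]

lemma neg_one_zpow_or (k : ℤ) : (-1 : SL(2, ℝ)) ^ k = 1 ∨ (-1 : SL(2, ℝ)) ^ k = -1 := by
  have h2 : (-1 : SL(2, ℝ)) ^ (2 : ℤ) = 1 := by
    rw [zpow_two, neg_mul_neg, one_mul]
  obtain ⟨q, r, h01, rfl⟩ : ∃ q r, (r = 0 ∨ r = 1) ∧ k = 2 * q + r :=
    ⟨k / 2, k % 2, Int.emod_two_eq k, (Int.mul_ediv_add_emod k 2).symm⟩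
  rcases h01 with h | h <;> subst h
  · left; rw [_root_.zpow_add, _root_.zpow_mul, h2, _root_.one_zpow, one_mul, zpow_zero]
  · right; rw [_root_.zpow_add, _root_.zpow_mul, h2, _root_.one_zpow, one_mul, zpow_one]

lemma mem_PMGamma_iff {N : ℕ} {x : SL(2, ℝ)} :
    x ∈ PMGamma N ↔ ∃ γ ∈ Gamma N, SL2ZtoSL2R γ = x ∨ SL2ZtoSL2R γ = -x := by
  have := zpowers_neg_one_normal
  constructor
  · intro hx
    have hx' : x ∈ ((((Gamma N).map SL2ZtoSL2R : Subgroup SL(2, ℝ)) : Set SL(2, ℝ)) *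
        ((Subgroup.zpowers (-1 : SL(2, ℝ)) : Subgroup SL(2, ℝ)) : Set SL(2, ℝ))) := by
      rw [← Subgroup.mul_normal]; exact hx
    obtain ⟨h, hh, n, hn, rfl⟩ := hx'
    obtain ⟨γ, hγ, rfl⟩ := hh
    obtain ⟨k, rfl⟩ := hn
    rcases neg_one_zpow_or k with he | he
    · exact ⟨γ, hγ, Or.inl (by beta_reduce; rw [he, mul_one])⟩
    · exact ⟨γ, hγ, Or.inr (by beta_reduce; rw [he, mul_neg_one, neg_neg])⟩
  · rintro ⟨γ, hγ, h | h⟩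
    · exact Subgroup.mem_sup_left ⟨γ, hγ, h⟩
    · have hx : x = SL2ZtoSL2R γ * (-1) := by rw [mul_neg_one, h, neg_neg]
      rw [hx]
      exact Subgroup.mul_mem_sup ⟨γ, hγ, rfl⟩ ⟨1, zpow_one _⟩

lemma conj_mem_PMGamma {N : ℕ} (γ : Matrix.SpecialLinearGroup (Fin 2) ℤ) {n : SL(2, ℝ)}
    (hn : n ∈ PMGamma N) : SL2ZtoSL2R γ * n * (SL2ZtoSL2R γ)⁻¹ ∈ PMGamma N := by
  obtain ⟨δ, hδ, h | h⟩ := mem_PMGamma_iff.mp hn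
  · refine mem_PMGamma_iff.mpr ⟨γ * δ * γ⁻¹, (Gamma_normal N).conj_mem δ hδ γ, Or.inl ?_⟩
    rw [_root_.map_mul, _root_.map_mul, map_inv, h]
  · refine mem_PMGamma_iff.mpr ⟨γ * δ * γ⁻¹, (Gamma_normal N).conj_mem δ hδ γ, Or.inr ?_⟩
    have hn' : n = -SL2ZtoSL2R δ := by rw [h, neg_neg]
    rw [_root_.map_mul, _root_.map_mul, map_inv, hn', mul_neg, neg_mul, neg_neg]

lemma integral_mem_normalizer {N : ℕ} (γ : Matrix.SpecialLinearGroup (Fin 2) ℤ) :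
    SL2ZtoSL2R γ ∈ Subgroup.normalizer (PMGamma N) := by
  rw [Subgroup.mem_normalizer_iff]
  intro n
  constructor
  · exact conj_mem_PMGamma γ
  · intro h
    have h2 := conj_mem_PMGamma (N := N) γ⁻¹ h
    rw [map_inv] at h2
    have heq : (SL2ZtoSL2R γ)⁻¹ * (SL2ZtoSL2R γ * n * (SL2ZtoSL2R γ)⁻¹) *
        ((SL2ZtoSL2R γ)⁻¹)⁻¹ = n := by group
    rwa [heq] at h2

lemma SL2ZtoSL2R_coe (γ : Matrix.SpecialLinearGroup (Fin 2) ℤ) :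
    (SL2ZtoSL2R γ).1 = γ.1.map (Int.cast : ℤ → ℝ) := rfl

def UZ (N : ℕ) : Matrix.SpecialLinearGroup (Fin 2) ℤ :=
  ⟨!![1, (N : ℤ); 0, 1], by simp [Matrix.det_fin_two_of]⟩

lemma UZ_mem_Gamma (N : ℕ) : UZ N ∈ Gamma N := by
  rw [Gamma_mem]
  refine ⟨?_, ?_, ?_, ?_⟩ <;> simp [UZ]

def WZ : Matrix.SpecialLinearGroup (Fin 2) ℤ :=
  ⟨!![0, -1; 1, 0], by simp [Matrix.det_fin_two_of]⟩

lemma entry_products {N : ℕ} (hN : 5 ≤ N) (g : SL(2, ℝ))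
    (hg : g * SL2ZtoSL2R (UZ N) * g⁻¹ ∈ PMGamma N) :
    (∃ k : ℤ, (k : ℝ) = g.1 0 0 * g.1 0 0) ∧ (∃ k : ℤ, (k : ℝ) = g.1 1 0 * g.1 1 0) ∧
      (∃ k : ℤ, (k : ℝ) = g.1 0 0 * g.1 1 0) := by
  haveI : NeZero N := ⟨by omega⟩
  have hNR : (N : ℝ) ≠ 0 := Nat.cast_ne_zero.mpr (by omega)
  have hdet : g.1 0 0 * g.1 1 1 - g.1 0 1 * g.1 1 0 = 1 := by
    have h2 := g.2; rwa [Matrix.det_fin_two] at h2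
  have hinv : (g⁻¹).1 = !![g.1 1 1, -g.1 0 1; -g.1 1 0, g.1 0 0] :=
    congrArg Subtype.val (SpecialLinearGroup.SL2_inv_expl g)
  obtain ⟨δ, hδ, h | h⟩ := mem_PMGamma_iff.mp hg
  · rw [Gamma_mem] at hδ
    have h00 := congrFun (congrFun (congrArg Subtype.val h) 0) 0
    have h01 := congrFun (congrFun (congrArg Subtype.val h) 0) 1
    have h10 := congrFun (congrFun (congrArg Subtype.val h) 1) 0
    simp only [Matrix.SpecialLinearGroup.coe_mul, hinv] at h00 h01 h10
    simp only [SL2ZtoSL2R_coe] at h00 h01 h10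
    simp [SL2ZtoSL2R, UZ, Matrix.mul_apply, Fin.sum_univ_two] at h00 h01 h10
    obtain ⟨k1, hk1⟩ := (ZMod.intCast_zmod_eq_zero_iff_dvd _ N).mp hδ.2.1
    obtain ⟨k2, hk2⟩ := (ZMod.intCast_zmod_eq_zero_iff_dvd _ N).mp hδ.2.2.1
    have hd00 : ((δ.1 0 0 - 1 : ℤ) : ZMod N) = 0 := by push_cast; rw [hδ.1]; ring
    obtain ⟨k3, hk3⟩ := (ZMod.intCast_zmod_eq_zero_iff_dvd _ N).mp hd00
    have hd : δ.1 0 0 = 1 + N * k3 := by omega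
    rw [hd] at h00
    rw [hk1] at h01
    rw [hk2] at h10
    push_cast at h00 h01 h10
    refine ⟨⟨k1, ?_⟩, ⟨-k2, ?_⟩, ⟨-k3, ?_⟩⟩
    · refine mul_left_cancel₀ hNR ?_
      linear_combination h01
    · refine mul_left_cancel₀ hNR ?_
      push_cast
      linear_combination -h10
    · refine mul_left_cancel₀ hNR ?_
      push_cast
      linear_combination -h00 - hdet
  · exfalso
    rw [Gamma_mem] at hδ
    have h00 := congrFun (congrFun (congrArg Subtype.val h) 0) 0
    have h11 := congrFun (congrFun (congrArg Subtype.val h) 1) 1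
    simp only [Matrix.SpecialLinearGroup.coe_neg, Matrix.SpecialLinearGroup.coe_mul, hinv] at h00 h11
    simp only [SL2ZtoSL2R_coe] at h00 h11
    simp [SL2ZtoSL2R, UZ, Matrix.mul_apply, Fin.sum_univ_two] at h00 h11
    have hsum : ((δ.1 0 0 + δ.1 1 1 : ℤ) : ℝ) = -2 := by
      push_cast
      linear_combination h00 + h11 - 2 * hdet
    have hsumZ : (δ.1 0 0 + δ.1 1 1 : ℤ) = -2 := by exact_mod_cast hsum
    have e2 : ((δ.1 0 0 + δ.1 1 1 : ℤ) : ZMod N) = 2 := by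
      push_cast
      rw [hδ.1, hδ.2.2.2]; norm_num
    rw [hsumZ] at e2
    have h4 : ((4 : ℤ) : ZMod N) = 0 := by
      push_cast at e2 ⊢
      linear_combination -e2
    have hdvd : (N : ℤ) ∣ 4 := (ZMod.intCast_zmod_eq_zero_iff_dvd 4 N).mp h4
    have hN4 : N ∣ 4 := by exact_mod_cast hdvd
    have := Nat.le_of_dvd (by norm_num) hN4
    omega

lemma int_of_sq_eq (x : ℝ) (mx mp e : ℤ) (hx : (mx : ℝ) = x * x)
    (hmul : mx * mp = e ^ 2) (hcop : IsCoprime mx mp) : ∃ k : ℤ, (k : ℝ) = x := by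
  obtain ⟨r, hr | hr⟩ := Int.sq_of_isCoprime hcop hmul
  · have hxr : (x - (r : ℝ)) * (x + (r : ℝ)) = 0 := by
      rw [hr] at hx
      push_cast at hx
      linear_combination -hx
    rcases mul_eq_zero.mp hxr with h0 | h0
    · exact ⟨r, by linarith⟩
    · exact ⟨-r, by push_cast; linarith⟩
  · have hx0 : x * x = 0 := by
      rw [hr] at hx
      push_cast at hx
      nlinarith [mul_self_nonneg x, sq_nonneg (r : ℝ)]
    exact ⟨0, by simp [(mul_self_eq_zero.mp hx0).symm]⟩

lemma cop_of_dvd {mx mp X Y : ℤ} (hXY : IsCoprime X Y) (h1 : mx ∣ X * X) (h2 : mp ∣ Y * Y) :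
    IsCoprime mx mp :=
  (((hXY.mul_left hXY).mul_right (hXY.mul_left hXY)).of_isCoprime_of_dvd_left
    h1).of_isCoprime_of_dvd_right h2

lemma entries_integral (a b c d : ℝ) (hdet : a * d - b * c = 1)
    (maa mbb mcc mdd mab mcd mbd : ℤ)
    (haa : (maa : ℝ) = a * a) (hbb : (mbb : ℝ) = b * b) (hcc : (mcc : ℝ) = c * c)
    (hdd : (mdd : ℝ) = d * d) (hab : (mab : ℝ) = a * b) (hcd : (mcd : ℝ) = c * d)
    (hbd : (mbd : ℝ) = b * d) :
    (∃ k : ℤ, (k : ℝ) = a) ∧ (∃ k : ℤ, (k : ℝ) = b) ∧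
      (∃ k : ℤ, (k : ℝ) = c) ∧ (∃ k : ℤ, (k : ℝ) = d) := by
  set A : ℤ := maa * mdd - mab * mcd with hAdef
  have hA : (A : ℝ) = a * d := by
    rw [hAdef]
    push_cast
    linear_combination mdd * haa + (a * a) * hdd - mcd * hab - (a * b) * hcd + (a * d) * hdet
  have hcopAB : IsCoprime A (A - 1) := ⟨1, -1, by ring⟩
  have id1 : maa * mdd = A * A := by
    have : ((maa * mdd : ℤ) : ℝ) = ((A * A : ℤ) : ℝ) := by
      push_cast
      rw [haa, hdd, hA]; ring
    exact_mod_cast this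
  have id2 : mbb * mcc = (A - 1) * (A - 1) := by
    have : ((mbb * mcc : ℤ) : ℝ) = (((A - 1) * (A - 1) : ℤ) : ℝ) := by
      push_cast
      rw [hbb, hcc, hA]
      linear_combination (-(b * c) - (a * d - 1)) * hdet
    exact_mod_cast this
  have id3 : maa * mbb = mab ^ 2 := by
    have : ((maa * mbb : ℤ) : ℝ) = ((mab ^ 2 : ℤ) : ℝ) := by
      push_cast; rw [haa, hbb, hab]; ring
    exact_mod_cast this
  have id4 : mcc * mdd = mcd ^ 2 := by
    have : ((mcc * mdd : ℤ) : ℝ) = ((mcd ^ 2 : ℤ) : ℝ) := by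
      push_cast; rw [hcc, hdd, hcd]; ring
    exact_mod_cast this
  have id5 : mdd * mbb = mbd ^ 2 := by
    have : ((mdd * mbb : ℤ) : ℝ) = ((mbd ^ 2 : ℤ) : ℝ) := by
      push_cast; rw [hdd, hbb, hbd]; ring
    exact_mod_cast this
  have dvdaa : maa ∣ A * A := ⟨mdd, id1.symm⟩
  have dvddd : mdd ∣ A * A := ⟨maa, by rw [← id1]; ring⟩
  have dvdbb : mbb ∣ (A - 1) * (A - 1) := ⟨mcc, id2.symm⟩
  have dvdcc : mcc ∣ (A - 1) * (A - 1) := ⟨mbb, by rw [← id2]; ring⟩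
  refine ⟨?_, ?_, ?_, ?_⟩
  · exact int_of_sq_eq a maa mbb mab haa id3 (cop_of_dvd hcopAB dvdaa dvdbb)
  · exact int_of_sq_eq b mbb maa mab hbb (by rw [← id3]; ring)
      (cop_of_dvd hcopAB.symm dvdbb dvdaa)
  · exact int_of_sq_eq c mcc mdd mcd hcc id4 (cop_of_dvd hcopAB.symm dvdcc dvddd)
  · exact int_of_sq_eq d mdd mbb mbd hdd id5 (cop_of_dvd hcopAB dvddd dvdbb)

lemma SL2ZtoSL2R_neg (γ : Matrix.SpecialLinearGroup (Fin 2) ℤ) :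
    SL2ZtoSL2R (-γ) = -SL2ZtoSL2R γ := by
  apply Subtype.ext
  show ((-γ).1.map (Int.cast : ℤ → ℝ)) = -(γ.1.map (Int.cast : ℤ → ℝ))
  ext i j
  simp

/-- For `N ≥ 5`, a matrix `g ∈ SL(2, ℝ)` normalizes `±Γ(N)` if and only if `g` or `-g`
lies in the image of `SL(2, ℤ)`; equivalently, the normalizer of the image of `Γ(N)` in
`PSL(2, ℝ)` is `PSL(2, ℤ)`. -/
theorem normalizer_Gamma_eq_SL2Z
    (N : ℕ) (hN : 5 ≤ N) (g : Matrix.SpecialLinearGroup (Fin 2) ℝ) :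
    g ∈ Subgroup.normalizer (PMGamma N) ↔
      ((∃ γ : Matrix.SpecialLinearGroup (Fin 2) ℤ, SL2ZtoSL2R γ = g) ∨
        (∃ γ : Matrix.SpecialLinearGroup (Fin 2) ℤ, SL2ZtoSL2R γ = -g)) := by
  constructor
  · intro hg
    have hUmem : SL2ZtoSL2R (UZ N) ∈ PMGamma N :=
      mem_PMGamma_iff.mpr ⟨UZ N, UZ_mem_Gamma N, Or.inl rfl⟩
    have hcon : ∀ h : SL(2, ℝ), h ∈ Subgroup.normalizer (PMGamma N) →
        h * SL2ZtoSL2R (UZ N) * h⁻¹ ∈ PMGamma N := fun h hh =>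
      (Subgroup.mem_normalizer_iff.mp hh _).mp hUmem
    set w : SL(2, ℝ) := SL2ZtoSL2R WZ with hwdef
    have hw : w ∈ Subgroup.normalizer (PMGamma N) := integral_mem_normalizer WZ
    have p1 := entry_products hN g (hcon g hg)
    have p2 := entry_products hN (g * w) (hcon _ (mul_mem hg hw))
    have p3 := entry_products hN g⁻¹ (hcon _ (inv_mem hg))
    have p4 := entry_products hN (g⁻¹ * w) (hcon _ (mul_mem (inv_mem hg) hw))
    have hinv : (g⁻¹).1 = !![g.1 1 1, -g.1 0 1; -g.1 1 0, g.1 0 0] :=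
    congrArg Subtype.val (SpecialLinearGroup.SL2_inv_expl g)
    have e1 : (g * w).1 0 0 = g.1 0 1 := by
      rw [Matrix.SpecialLinearGroup.coe_mul, hwdef, SL2ZtoSL2R_coe]
      simp [hwdef, SL2ZtoSL2R, WZ, Matrix.mul_apply, Fin.sum_univ_two]
    have e2 : (g * w).1 1 0 = g.1 1 1 := by
      rw [Matrix.SpecialLinearGroup.coe_mul, hwdef, SL2ZtoSL2R_coe]
      simp [hwdef, SL2ZtoSL2R, WZ, Matrix.mul_apply, Fin.sum_univ_two]
    have e3 : (g⁻¹).1 0 0 = g.1 1 1 := by rw [hinv]; simp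
    have e4 : (g⁻¹).1 1 0 = -g.1 1 0 := by rw [hinv]; simp
    have e5 : (g⁻¹ * w).1 0 0 = -g.1 0 1 := by
      rw [Matrix.SpecialLinearGroup.coe_mul, hinv, hwdef, SL2ZtoSL2R_coe]
      simp [hwdef, SL2ZtoSL2R, WZ, Matrix.mul_apply, Fin.sum_univ_two]
    have e6 : (g⁻¹ * w).1 1 0 = g.1 0 0 := by
      rw [Matrix.SpecialLinearGroup.coe_mul, hinv, hwdef, SL2ZtoSL2R_coe]
      simp [hwdef, SL2ZtoSL2R, WZ, Matrix.mul_apply, Fin.sum_univ_two]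
    rw [e1, e2] at p2
    rw [e3, e4] at p3
    rw [e5, e6] at p4
    have hdet : g.1 0 0 * g.1 1 1 - g.1 0 1 * g.1 1 0 = 1 := by
      have h2 := g.2; rwa [Matrix.det_fin_two] at h2
    obtain ⟨-, ⟨maa0, haa0⟩, ⟨mab0, hab0⟩⟩ := p4
    obtain ⟨⟨mbb0, hbb0⟩, ⟨mdd0, hdd0⟩, ⟨mbd0, hbd0⟩⟩ := p2
    obtain ⟨-, ⟨mcc0, hcc0⟩, -⟩ := p1
    obtain ⟨-, -, ⟨mcd0, hcd0⟩⟩ := p3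
    have haa : ((maa0 : ℤ) : ℝ) = g.1 0 0 * g.1 0 0 := haa0
    have hab : ((-mab0 : ℤ) : ℝ) = g.1 0 0 * g.1 0 1 := by push_cast; linear_combination -hab0
    have hcd : ((-mcd0 : ℤ) : ℝ) = g.1 1 0 * g.1 1 1 := by push_cast; linear_combination -hcd0
    obtain ⟨⟨ka, hka⟩, ⟨kb, hkb⟩, ⟨kc, hkc⟩, ⟨kd, hkd⟩⟩ :=
      entries_integral (g.1 0 0) (g.1 0 1) (g.1 1 0) (g.1 1 1) hdet
        maa0 mbb0 mcc0 mdd0 (-mab0) (-mcd0) mbd0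
        haa hbb0 hcc0 hdd0 hab hcd hbd0
    have hdetZ : ka * kd - kb * kc = 1 := by
      have : ((ka * kd - kb * kc : ℤ) : ℝ) = 1 := by
        push_cast
        rw [hka, hkb, hkc, hkd]
        exact hdet
      exact_mod_cast this
    refine Or.inl ⟨⟨!![ka, kb; kc, kd], by rw [Matrix.det_fin_two_of]; exact hdetZ⟩, ?_⟩
    apply Subtype.ext
    show ((!![ka, kb; kc, kd] : Matrix (Fin 2) (Fin 2) ℤ).map (Int.cast : ℤ → ℝ)) = g.1
    ext i j
    fin_cases i <;> fin_cases j <;>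
      simp only [Matrix.map_apply, Matrix.cons_val', Matrix.cons_val_zero, Matrix.cons_val_one,
        Matrix.head_cons, Matrix.head_fin_const, Matrix.of_apply, Matrix.empty_val',
        Matrix.cons_val_fin_one]
    · exact hka
    · exact hkb
    · exact hkc
    · exact hkd
  · rintro (⟨γ, rfl⟩ | ⟨γ, hγ⟩)
    · exact integral_mem_normalizer γ
    · have hgeq : g = SL2ZtoSL2R (-γ) := by rw [SL2ZtoSL2R_neg, hγ, neg_neg]
      rw [hgeq]
      exact integral_mem_normalizer (-γ)
end
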